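/- arXiv:1705.07298 — 3 statements merged into one kernel-verified Lean document; each statement's English description precedes it below -/
import Mathlib

section
/- Let ω > 0 and let x : ℝ → ℂ be a measurable function with ∫_ℝ |x(ξ)| e^{−ω|ξ|} dξ < ∞. If t ∈ ℝ is a Lebesgue point of x (i.e. (1/(2ε)) ∫_{t−ε}^{t+ε} |x(τ) − x(t)| dτ → 0 as ε → 0⁺) and x(t) ≠ 0, then ∫_ℝ |S_ω(t − τ) x(τ)| dτ = ∞. -/
/-!
Near the diagonal the kernel has a non-integrable singularity: `sinh u ≤ u cosh u` gives
`|S_ω(ξ)| ≥ 1 / (π cosh ω |ξ|)` for `0 < |ξ| ≤ 1`. At a Lebesgue point `t` with `x t ≠ 0`, the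
integral of `‖x τ - x t‖` over `[t - r, t + r]` is at most `‖x t‖ r / 2` for small `r`, so `x`
keeps mass at least `‖x t‖ r / 2` on the annulus `r / 2 < |τ - t| ≤ r`, of length `r`.
Each of the infinitely many dyadic annuli therefore contributes at least `‖x t‖ / 2` to
`∫ ‖x τ‖ / |t - τ| dτ`.
-/

open MeasureTheory Filter Set

/-- The kernel `S_ω(ξ) = (ω/π) · (1/sinh(ωξ))`. -/
noncomputable def Sker (ω ξ : ℝ) : ℝ := (ω / Real.pi) * (1 / Real.sinh (ω * ξ))

open Metric
open scoped ENNReal Topology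

lemma Real.sinh_le_mul_cosh {u : ℝ} (hu : 0 ≤ u) : sinh u ≤ u * cosh u := by
  have hmono : MonotoneOn (fun u : ℝ => u * cosh u - sinh u) (Ici 0) := by
    have hderiv : ∀ y, HasDerivAt (fun u : ℝ => u * cosh u - sinh u) (y * sinh y) y := fun y =>
      (((hasDerivAt_id' y).mul (hasDerivAt_cosh y)).sub (hasDerivAt_sinh y)).congr_deriv (by ring)
    refine monotoneOn_of_deriv_nonneg (convex_Ici 0)
      (fun y _ => (hderiv y).continuousAt.continuousWithinAt)
      (fun y _ => (hderiv y).differentiableAt.differentiableWithinAt) fun y hy => ?_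
    rw [interior_Ici, mem_Ioi] at hy
    rw [(hderiv y).deriv]
    exact mul_nonneg hy.le (sinh_nonneg_iff.2 hy.le)
  simpa using hmono self_mem_Ici hu hu

lemma inv_pi_mul_cosh_div_abs_le_abs_Sker {ω ξ : ℝ} (hω : 0 < ω) (hξ : ξ ≠ 0) (hξ1 : |ξ| ≤ 1) :
    (Real.pi * Real.cosh ω)⁻¹ / |ξ| ≤ |Sker ω ξ| := by
  have hu : 0 < ω * |ξ| := by positivity
  have hsinh : Real.sinh (ω * |ξ|) ≤ ω * |ξ| * Real.cosh ω := calc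
    Real.sinh (ω * |ξ|) ≤ ω * |ξ| * Real.cosh (ω * |ξ|) := Real.sinh_le_mul_cosh hu.le
    _ ≤ ω * |ξ| * Real.cosh ω := by
      gcongr
      rw [Real.cosh_le_cosh, abs_of_pos hu, abs_of_pos hω]
      nlinarith
  rw [Sker, abs_mul, abs_of_pos (div_pos hω Real.pi_pos), abs_div, abs_one, Real.abs_sinh, abs_mul,
    abs_of_pos hω]
  calc (Real.pi * Real.cosh ω)⁻¹ / |ξ| = ω / Real.pi * (1 / (ω * |ξ| * Real.cosh ω)) := by
        field_simp
    _ ≤ ω / Real.pi * (1 / Real.sinh (ω * |ξ|)) := by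
        gcongr

lemma ofReal_inv_pi_mul_cosh_mul_enorm_div_le_enorm_Sker_mul {ω ξ : ℝ} (hω : 0 < ω) (hξ : ξ ≠ 0)
    (hξ1 : |ξ| ≤ 1) (z : ℂ) :
    ENNReal.ofReal (Real.pi * Real.cosh ω)⁻¹ * (‖z‖ₑ / ‖ξ‖ₑ) ≤ ‖(Sker ω ξ : ℂ) * z‖ₑ := by
  have hS : ENNReal.ofReal (Real.pi * Real.cosh ω)⁻¹ / ‖ξ‖ₑ ≤ ‖(Sker ω ξ : ℂ)‖ₑ := by
    rw [Real.enorm_eq_ofReal_abs, ← ENNReal.ofReal_div_of_pos (abs_pos.2 hξ), ← ofReal_norm,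
      Complex.norm_real, Real.norm_eq_abs]
    exact ENNReal.ofReal_le_ofReal (inv_pi_mul_cosh_div_abs_le_abs_Sker hω hξ hξ1)
  calc ENNReal.ofReal (Real.pi * Real.cosh ω)⁻¹ * (‖z‖ₑ / ‖ξ‖ₑ)
      = ENNReal.ofReal (Real.pi * Real.cosh ω)⁻¹ / ‖ξ‖ₑ * ‖z‖ₑ := by
        simp only [div_eq_mul_inv]
        ring
    _ ≤ ‖(Sker ω ξ : ℂ) * z‖ₑ := by
        rw [enorm_mul]
        gcongr

lemma Antitone.pairwise_disjoint_sdiff_succ {α : Type*} {s : ℕ → Set α} (hs : Antitone s) :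
    Pairwise (Function.onFun Disjoint fun k => s k \ s (k + 1)) := by
  intro k l hkl
  wlog h : k < l generalizing k l
  · exact (this hkl.symm (by omega)).symm
  exact disjoint_sdiff_left.mono_right (sdiff_subset.trans (hs h))

lemma Real.volume_closedBall_sdiff_closedBall_half (t : ℝ) {r : ℝ} (hr : 0 ≤ r) :
    volume (closedBall t r \ closedBall t (r / 2)) = ENNReal.ofReal r := by
  rw [measure_sdiff (closedBall_subset_closedBall (by linarith))
    measurableSet_closedBall.nullMeasurableSet measure_closedBall_lt_top.ne,
    Real.volume_closedBall, Real.volume_closedBall,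
    ← ENNReal.ofReal_sub _ (by positivity)]
  ring_nf

section LebesguePoint

variable {E : Type*} [NormedAddCommGroup E]

lemma locallyIntegrable_of_integrable_norm_mul_exp_neg_mul_abs {f : ℝ → E} {ω : ℝ}
    (hf : AEStronglyMeasurable f) (hint : Integrable fun ξ => ‖f ξ‖ * Real.exp (-ω * |ξ|)) :
    LocallyIntegrable f := by
  refine (hint.locallyIntegrable.mul_continuous (g := fun ξ => Real.exp (ω * |ξ|))
    (by fun_prop)).mono hf (ae_of_all _ fun ξ => ?_)
  rw [mul_assoc, ← Real.exp_add, neg_mul, neg_add_cancel, Real.exp_zero, mul_one, norm_norm]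

lemma eventually_lintegral_closedBall_enorm_sub_le {f : ℝ → E} {t : ℝ} (hf : LocallyIntegrable f)
    (hLeb : Tendsto (fun ε : ℝ => (1 / (2 * ε)) * ∫ τ in (t - ε)..(t + ε), ‖f τ - f t‖)
      (𝓝[>] 0) (𝓝 0))
    {η : ℝ} (hη : 0 < η) :
    ∀ᶠ ε in 𝓝[>] 0, ∫⁻ τ in closedBall t ε, ‖f τ - f t‖ₑ ≤ ENNReal.ofReal (η * ε) := by
  filter_upwards [hLeb.eventually_lt_const (half_pos hη), self_mem_nhdsWithin]
    with ε hε (hε0 : 0 < ε)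
  have hint : IntegrableOn (fun τ => f τ - f t) (closedBall t ε) :=
    (hf.integrableOn_isCompact (isCompact_closedBall t ε)).sub
      (integrableOn_const measure_closedBall_lt_top.ne)
  rw [← ofReal_integral_norm_eq_lintegral_enorm hint, Real.closedBall_eq_Icc,
    integral_Icc_eq_integral_Ioc, ← intervalIntegral.integral_of_le (by linarith)]
  refine ENNReal.ofReal_le_ofReal ?_
  rw [one_div, inv_mul_lt_iff₀ (by positivity)] at hε
  linarith

lemma half_enorm_le_lintegral_closedBall_sdiff_enorm_div {f : ℝ → E} {t ε : ℝ}
    (hf : AEStronglyMeasurable f) (hε : 0 < ε)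
    (hsmall : ∫⁻ τ in closedBall t ε, ‖f τ - f t‖ₑ ≤ ENNReal.ofReal (‖f t‖ / 2 * ε)) :
    ‖f t‖ₑ / 2 ≤ ∫⁻ τ in closedBall t ε \ closedBall t (ε / 2), ‖f τ‖ₑ / ‖t - τ‖ₑ := by
  set A := closedBall t ε \ closedBall t (ε / 2)
  have hsmall' : ∫⁻ τ in A, ‖f τ - f t‖ₑ ≤ ‖f t‖ₑ / 2 * ENNReal.ofReal ε := by
    refine (lintegral_mono_set sdiff_subset).trans (hsmall.trans_eq ?_)
    rw [ENNReal.ofReal_mul (by positivity), ENNReal.ofReal_div_of_pos two_pos, ofReal_norm]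
    simp
  have hmass :
      ‖f t‖ₑ * ENNReal.ofReal ε ≤ ‖f t‖ₑ / 2 * ENNReal.ofReal ε + ∫⁻ τ in A, ‖f τ‖ₑ := calc
    ‖f t‖ₑ * ENNReal.ofReal ε = ∫⁻ τ in A, ‖f t‖ₑ := by
      rw [setLIntegral_const, Real.volume_closedBall_sdiff_closedBall_half t hε.le]
    _ ≤ ∫⁻ τ in A, (‖f τ - f t‖ₑ + ‖f τ‖ₑ) :=
      lintegral_mono fun τ => calc
        ‖f t‖ₑ = ‖f τ - (f τ - f t)‖ₑ := by rw [sub_sub_cancel]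
        _ ≤ ‖f τ‖ₑ + ‖f τ - f t‖ₑ := enorm_sub_le
        _ = ‖f τ - f t‖ₑ + ‖f τ‖ₑ := add_comm _ _
    _ = (∫⁻ τ in A, ‖f τ - f t‖ₑ) + ∫⁻ τ in A, ‖f τ‖ₑ :=
      lintegral_add_left' (f := fun τ => ‖f τ - f t‖ₑ)
        (hf.sub aestronglyMeasurable_const).enorm.restrict _
    _ ≤ _ := add_le_add_left hsmall' _
  have hε' : ENNReal.ofReal ε ≠ 0 := (ENNReal.ofReal_pos.2 hε).ne'
  have hmass' : ‖f t‖ₑ / 2 * ENNReal.ofReal ε ≤ ∫⁻ τ in A, ‖f τ‖ₑ := by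
    rw [← ENNReal.sub_half enorm_ne_top, ENNReal.sub_mul fun _ _ => ENNReal.ofReal_ne_top]
    exact tsub_le_iff_left.2 hmass
  calc ‖f t‖ₑ / 2 = ‖f t‖ₑ / 2 * ENNReal.ofReal ε / ENNReal.ofReal ε :=
        (ENNReal.mul_div_cancel_right hε' ENNReal.ofReal_ne_top).symm
    _ ≤ (∫⁻ τ in A, ‖f τ‖ₑ) / ENNReal.ofReal ε := ENNReal.div_le_div_right hmass' _
    _ = ∫⁻ τ in A, ‖f τ‖ₑ / ENNReal.ofReal ε := by
      simp only [div_eq_mul_inv]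
      exact (lintegral_mul_const' _ _ (ENNReal.inv_ne_top.2 hε')).symm
    _ ≤ ∫⁻ τ in A, ‖f τ‖ₑ / ‖t - τ‖ₑ := by
      refine setLIntegral_mono' (measurableSet_closedBall.diff measurableSet_closedBall)
        fun τ hτ => ENNReal.div_le_div_left ?_ _
      rw [← edist_eq_enorm_sub, edist_dist]
      exact ENNReal.ofReal_le_ofReal (mem_closedBall'.1 hτ.1)

theorem lintegral_closedBall_enorm_div_enorm_sub_eq_top {f : ℝ → E} {t : ℝ}
    (hf : LocallyIntegrable f)
    (hLeb : Tendsto (fun ε : ℝ => (1 / (2 * ε)) * ∫ τ in (t - ε)..(t + ε), ‖f τ - f t‖)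
      (𝓝[>] 0) (𝓝 0))
    (hft : f t ≠ 0) {δ : ℝ} (hδ : 0 < δ) :
    ∫⁻ τ in closedBall t δ, ‖f τ‖ₑ / ‖t - τ‖ₑ = ∞ := by
  obtain ⟨δ₀, hδ₀, hsmall⟩ := mem_nhdsGT_iff_exists_Ioc_subset.1
    (eventually_lintegral_closedBall_enorm_sub_le hf hLeb (half_pos (norm_pos_iff.2 hft)))
  have hmin : 0 < min δ δ₀ := lt_min hδ hδ₀
  set r : ℕ → ℝ := fun k => min δ δ₀ / 2 ^ k
  have hr_pos : ∀ k, 0 < r k := fun k => div_pos hmin (by positivity)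
  have hr_le : ∀ k, r k ≤ min δ δ₀ := fun k => div_le_self hmin.le (one_le_pow₀ one_le_two)
  have hr_succ : ∀ k, r (k + 1) = r k / 2 := fun k => by simp only [r, pow_succ, div_div]
  have hr_anti : Antitone fun k => closedBall t (r k) := antitone_nat_of_succ_le fun k =>
    closedBall_subset_closedBall (by rw [hr_succ]; linarith [hr_pos k])
  have hannulus : ∀ k, ‖f t‖ₑ / 2 ≤
      ∫⁻ τ in closedBall t (r k) \ closedBall t (r (k + 1)), ‖f τ‖ₑ / ‖t - τ‖ₑ := fun k => by
    rw [hr_succ]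
    exact half_enorm_le_lintegral_closedBall_sdiff_enorm_div hf.aestronglyMeasurable (hr_pos k)
      (hsmall ⟨hr_pos k, (hr_le k).trans (min_le_right _ _)⟩)
  rw [eq_top_iff]
  calc ∞ = ∑' _ : ℕ, ‖f t‖ₑ / 2 :=
        (ENNReal.tsum_const_eq_top_of_ne_zero (by simpa using hft)).symm
    _ ≤ ∑' k, ∫⁻ τ in closedBall t (r k) \ closedBall t (r (k + 1)), ‖f τ‖ₑ / ‖t - τ‖ₑ :=
        ENNReal.tsum_le_tsum hannulus
    _ = ∫⁻ τ in ⋃ k, closedBall t (r k) \ closedBall t (r (k + 1)), ‖f τ‖ₑ / ‖t - τ‖ₑ :=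
        (lintegral_iUnion (fun _ => measurableSet_closedBall.diff measurableSet_closedBall)
          hr_anti.pairwise_disjoint_sdiff_succ _).symm
    _ ≤ ∫⁻ τ in closedBall t δ, ‖f τ‖ₑ / ‖t - τ‖ₑ :=
        lintegral_mono_set (iUnion_subset fun k => sdiff_subset.trans
          (closedBall_subset_closedBall ((hr_le k).trans (min_le_left _ _))))

end LebesguePoint

/-- If `x` is measurable with `∫ |x(ξ)| e^{-ω|ξ|} dξ < ∞`, `t` is a Lebesgue point of `x`
and `x t ≠ 0`, then `∫ |S_ω(t-τ) x(τ)| dτ = ∞`. -/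
theorem stmt2 (ω : ℝ) (hω : 0 < ω) (x : ℝ → ℂ) (hmx : Measurable x)
    (hx : Integrable (fun ξ : ℝ => ‖x ξ‖ * Real.exp (-ω * |ξ|)))
    (t : ℝ)
    (hLeb : Tendsto (fun ε : ℝ => (1 / (2 * ε)) * ∫ τ in (t - ε)..(t + ε), ‖x τ - x t‖)
      (nhdsWithin 0 (Set.Ioi 0)) (nhds 0))
    (hxt : x t ≠ 0) :
    ∫⁻ τ : ℝ, ‖(Sker ω (t - τ) : ℂ) * x τ‖₊ = ⊤ := by
  have hloc : LocallyIntegrable x :=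
    locallyIntegrable_of_integrable_norm_mul_exp_neg_mul_abs hmx.aestronglyMeasurable hx
  set K : ℝ≥0∞ := ENNReal.ofReal (Real.pi * Real.cosh ω)⁻¹
  have hK : K ≠ 0 := (ENNReal.ofReal_pos.2 (by positivity)).ne'
  have hkernel : ∀ᵐ τ, τ ∈ closedBall t 1 →
      K * (‖x τ‖ₑ / ‖t - τ‖ₑ) ≤ ‖(Sker ω (t - τ) : ℂ) * x τ‖ₑ := by
    filter_upwards [Measure.ae_ne volume t] with τ hτt hτ
    exact ofReal_inv_pi_mul_cosh_mul_enorm_div_le_enorm_Sker_mul hω (sub_ne_zero.2 hτt.symm)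
      (mem_closedBall'.1 hτ) (x τ)
  rw [eq_top_iff]
  calc ⊤ = K * ∫⁻ τ in closedBall t 1, ‖x τ‖ₑ / ‖t - τ‖ₑ := by
        rw [lintegral_closedBall_enorm_div_enorm_sub_eq_top hloc hLeb hxt one_pos,
          ENNReal.mul_top hK]
    _ = ∫⁻ τ in closedBall t 1, K * (‖x τ‖ₑ / ‖t - τ‖ₑ) :=
        (lintegral_const_mul' _ _ ENNReal.ofReal_ne_top).symm
    _ ≤ ∫⁻ τ in closedBall t 1, ‖(Sker ω (t - τ) : ℂ) * x τ‖ₑ :=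
        setLIntegral_mono_ae' measurableSet_closedBall hkernel
    _ ≤ ∫⁻ τ, ‖(Sker ω (t - τ) : ℂ) * x τ‖₊ := setLIntegral_le_lintegral _ _
end

section
/- Let ω > 0. For every λ ∈ ℝ, ∫_ℝ (ω/π) · (1/cosh(ωt)) · e^{itλ} dt = 1/cosh(πλ/(2ω)). -/
/-!
Substituting `x = sigmoid s = 1 / (1 + e^{-s})` turns the Beta integral `B(u, 1 - u)` into
`∫ e^{us} / (1 + e^s) ds`, so Euler's reflection formula gives this integral as `π / sin (π u)`.
Since `1 / cosh (ω t) = 2 e^{ωt} / (1 + e^{2ωt})`, the Fourier transform of `sech` is the case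
`u = 1/2 + i λ / (2ω)` after rescaling `s = 2ωt`, and `sin (π/2 + i y) = cosh y`.
-/

open MeasureTheory Set Real

theorem Complex.betaIntegral_eq_integral_sigmoid (u v : ℂ) :
    betaIntegral u v = ∫ s : ℝ, (sigmoid s : ℂ) ^ u * (sigmoid (-s) : ℂ) ^ v := by
  have hchange := integral_image_eq_integral_abs_deriv_smul MeasurableSet.univ
    (fun s _ => (hasDerivAt_sigmoid s).hasDerivWithinAt) sigmoid_injective.injOn
    (fun x : ℝ => (x : ℂ) ^ (u - 1) * (1 - (x : ℂ)) ^ (v - 1))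
  rw [image_univ, range_sigmoid, setIntegral_univ] at hchange
  rw [betaIntegral, intervalIntegral.integral_of_le zero_le_one,
    integral_Ioc_eq_integral_Ioo, hchange]
  refine integral_congr_ae (ae_of_all _ fun s => ?_)
  have hσ : (sigmoid s : ℂ) ≠ 0 := by exact_mod_cast (sigmoid_pos s).ne'
  have hσ' : (sigmoid (-s) : ℂ) ≠ 0 := by exact_mod_cast (sigmoid_pos (-s)).ne'
  have hσ_neg : 1 - (sigmoid s : ℂ) = sigmoid (-s) := by rw [sigmoid_neg]; push_cast; ring
  dsimp only
  rw [← sigmoid_neg, abs_of_pos (mul_pos (sigmoid_pos s) (sigmoid_pos (-s))), real_smul, hσ_neg,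
    cpow_sub _ _ hσ, cpow_sub _ _ hσ', cpow_one, cpow_one]
  push_cast
  field_simp

theorem sigmoid_cpow_mul_sigmoid_neg_cpow_one_sub (u : ℂ) (s : ℝ) :
    (sigmoid s : ℂ) ^ u * (sigmoid (-s) : ℂ) ^ (1 - u) = Complex.exp (u * s) / (1 + exp s) := by
  have hσ' : (sigmoid (-s) : ℂ) ≠ 0 := by exact_mod_cast (sigmoid_pos (-s)).ne'
  have hσ : sigmoid s = exp s * sigmoid (-s) := by
    simpa [mul_comm] using (sigmoid_mul_rexp_neg (-s)).symm
  have hexp : (exp s : ℂ) ^ u = Complex.exp (u * s) := by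
    rw [Complex.cpow_def_of_ne_zero (by exact_mod_cast (exp_pos s).ne'),
      ← Complex.ofReal_log (exp_pos s).le, log_exp, mul_comm]
  have hσ_neg : (sigmoid (-s) : ℂ) = 1 / (1 + exp s) := by
    rw [sigmoid_def, neg_neg]; push_cast; ring
  rw [hσ, Complex.ofReal_mul, Complex.mul_cpow_ofReal_nonneg (exp_pos s).le (sigmoid_pos _).le,
    hexp, mul_assoc, ← Complex.cpow_add _ _ hσ', add_sub_cancel, Complex.cpow_one, hσ_neg,
    mul_one_div]

theorem integral_cexp_mul_div_one_add_exp {u : ℂ} (h0 : 0 < u.re) (h1 : u.re < 1) :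
    ∫ s : ℝ, Complex.exp (u * s) / (1 + exp s) = π / Complex.sin (π * u) := by
  have hbeta := Complex.Gamma_mul_Gamma_eq_betaIntegral h0 (show 0 < (1 - u).re by simpa)
  rw [add_sub_cancel, Complex.Gamma_one, one_mul, Complex.Gamma_mul_Gamma_one_sub,
    Complex.betaIntegral_eq_integral_sigmoid] at hbeta
  simpa only [sigmoid_cpow_mul_sigmoid_neg_cpow_one_sub] using hbeta.symm

theorem one_div_cosh_eq (x : ℝ) : 1 / cosh x = 2 * (exp x / (1 + exp (2 * x))) := by
  rw [cosh_eq, exp_neg, show 2 * x = x + x by ring, exp_add]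
  field_simp
  ring

theorem integral_one_div_cosh_mul_cexp {ω : ℝ} (hω : 0 < ω) (l : ℝ) :
    ∫ t : ℝ, (1 / cosh (ω * t) : ℂ) * Complex.exp (Complex.I * t * l)
      = π / ω / cosh (π * l / (2 * ω)) := by
  set c : ℝ := l / (2 * ω) with hc
  set u : ℂ := 1 / 2 + c * Complex.I with hu
  have hintegrand : ∀ t : ℝ, (1 / cosh (ω * t) : ℂ) * Complex.exp (Complex.I * t * l)
      = 2 * (Complex.exp (u * ↑(2 * ω * t)) / (1 + exp (2 * ω * t))) := by
    intro t
    have hω' : (ω : ℂ) ≠ 0 := by exact_mod_cast hω.ne'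
    have hsplit : Complex.exp (u * ↑(2 * ω * t))
        = exp (ω * t) * Complex.exp (Complex.I * t * l) := by
      rw [Complex.ofReal_exp, ← Complex.exp_add, hu, hc]
      congr 1
      push_cast
      field_simp
    have hsech := congrArg (fun r : ℝ => (r : ℂ)) (one_div_cosh_eq (ω * t))
    rw [hsplit, mul_assoc 2 ω t]
    push_cast at hsech ⊢
    rw [hsech]
    ring
  have hsin : Complex.sin (π * u) = cosh (π * c) := by
    rw [hu, mul_add, mul_one_div, ← mul_assoc, add_comm, Complex.sin_add_pi_div_two,
      ← Complex.ofReal_mul, Complex.cos_mul_I, ← Complex.ofReal_cosh]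
  simp_rw [hintegrand]
  rw [integral_const_mul,
    Measure.integral_comp_mul_left (fun s : ℝ => Complex.exp (u * s) / (1 + exp s)),
    integral_cexp_mul_div_one_add_exp (by norm_num [hu]) (by norm_num [hu]), hsin, hc,
    mul_div_assoc, abs_of_pos (by positivity), Complex.real_smul]
  push_cast
  field_simp

/-- For `ω > 0` and every real `λ`,
`∫ (ω/π)(1/cosh(ωt)) e^{itλ} dt = 1/cosh(πλ/(2ω))`. -/
theorem stmt4 (ω : ℝ) (hω : 0 < ω) (l : ℝ) :
    ∫ t : ℝ, ((ω / Real.pi) * (1 / Real.cosh (ω * t)) : ℂ) *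
        Complex.exp (Complex.I * t * l)
      = ((1 / Real.cosh (Real.pi * l / (2 * ω)) : ℝ) : ℂ) := by
  simp_rw [mul_assoc ((ω : ℂ) / π)]
  rw [integral_const_mul, integral_one_div_cosh_mul_cexp hω]
  have hω' : (ω : ℂ) ≠ 0 := by exact_mod_cast hω.ne'
  have hπ : (π : ℂ) ≠ 0 := by exact_mod_cast pi_ne_zero
  push_cast
  field_simp
end

section
/- Let ω > 0 and 0 ≤ σ < ω. Let f : ℝ → ℂ be measurable with ∫_ℝ |f(τ)|² e^{−2σ|τ|} dτ < ∞, and define g(t) = ∫_ℝ C_ω(t − τ) f(τ) dτ. Then ∫_ℝ |g(t)|² e^{−2σ|t|} dt < ∞ and ‖g‖_{L²_σ} ≤ (2/(1 − σ/ω)) · ‖f‖_{L²_σ}. -/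
open MeasureTheory Filter Set

/-- The kernel `C_ω(ξ) = (ω/π) · (1/cosh(ωξ))`. -/
noncomputable def Cker (ω ξ : ℝ) : ℝ := (ω / Real.pi) * (1 / Real.cosh (ω * ξ))

/-!
Since `1 / cosh x ≤ 2 e^{-|x|}` and `e^{-σ|t|} ≤ e^{σ|t-τ|} e^{-σ|τ|}` for `σ ≥ 0`, the weighted
function `|g(t)| e^{-σ|t|}` is dominated by the convolution of `F = |f| e^{-σ|·|} ∈ L²` with the
integrable kernel `K(ξ) = (2ω/π) e^{-(ω-σ)|ξ|}`. Young's inequality `‖F ⋆ K‖₂ ≤ ‖K‖₁ ‖F‖₂`,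
obtained from Cauchy–Schwarz against `K(t - τ) dτ` and Fubini, then gives the bound with the
constant `‖K‖₁ = 4ω / (π(ω - σ)) ≤ 2 / (1 - σ/ω)`.
-/

open scoped Convolution
open ContinuousLinearMap (lsmul lsmul_apply)

section CauchySchwarz

variable {α : Type*} [MeasurableSpace α] {μ : Measure α} {w F : α → ℝ}

theorem sq_integral_mul_le_integral_mul_integral_mul_sq (hw0 : 0 ≤ᵐ[μ] w)
    (hw : Integrable w μ) (hwF2 : Integrable (fun x => w x * F x ^ 2) μ) :
    (∫ x, w x * F x ∂μ) ^ 2 ≤ (∫ x, w x ∂μ) * ∫ x, w x * F x ^ 2 ∂μ := by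
  have hwF2_nonneg : 0 ≤ ∫ x, w x * F x ^ 2 ∂μ :=
    integral_nonneg_of_ae (hw0.mono fun x hx => mul_nonneg hx (sq_nonneg _))
  by_cases hwF : Integrable (fun x => w x * F x) μ
  swap
  · rw [integral_undef hwF, zero_pow two_ne_zero]
    exact mul_nonneg (integral_nonneg_of_ae hw0) hwF2_nonneg
  -- `∫ w (s - F)² ≥ 0` for every `s`, so this quadratic in `s` has nonpositive discriminant.
  have hquad : ∀ s : ℝ, 0 ≤ (∫ x, w x ∂μ) * (s * s) + (-2 * ∫ x, w x * F x ∂μ) * s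
      + ∫ x, w x * F x ^ 2 ∂μ := by
    intro s
    calc 0 ≤ ∫ x, w x * (s - F x) ^ 2 ∂μ :=
          integral_nonneg_of_ae (hw0.mono fun x hx => mul_nonneg hx (sq_nonneg _))
      _ = ∫ x, (w x * (s * s) + -2 * s * (w x * F x)) ∂μ + ∫ x, w x * F x ^ 2 ∂μ := by
          have hlin : Integrable (fun x => w x * (s * s) + -2 * s * (w x * F x)) μ :=
            (hw.mul_const _).add (hwF.const_mul _)
          rw [← integral_add hlin hwF2]
          congr 1 with x
          ring
      _ = _ := by
          rw [integral_add (hw.mul_const _) (hwF.const_mul _), integral_mul_const,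
            integral_const_mul]
          ring
  have := discrim_le_zero hquad
  rw [discrim] at this
  nlinarith

theorem integrable_mul_of_integrable_mul_sq (hw0 : 0 ≤ᵐ[μ] w) (hw : Integrable w μ)
    (hF : AEStronglyMeasurable F μ) (hwF2 : Integrable (fun x => w x * F x ^ 2) μ) :
    Integrable (fun x => w x * F x) μ := by
  refine ((hw.add hwF2).div_const 2).mono' (hw.aestronglyMeasurable.mul hF) ?_
  filter_upwards [hw0] with x hx
  rw [Pi.zero_apply] at hx
  rw [Pi.add_apply, Real.norm_eq_abs, abs_mul, abs_of_nonneg hx]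
  nlinarith [mul_nonneg hx (sq_nonneg (|F x| - 1)), sq_abs (F x)]

end CauchySchwarz

section Young

variable {G : Type*} [AddCommGroup G] [MeasurableSpace G] [MeasurableAdd₂ G] [MeasurableNeg G]
  {μ : Measure G} [μ.IsAddLeftInvariant] [μ.IsNegInvariant] {K F : G → ℝ}

theorem ae_convolutionExistsAt_of_integrable_sq [SFinite μ] (hK0 : 0 ≤ K) (hK : Integrable K μ)
    (hF : AEStronglyMeasurable F μ) (hF2 : Integrable (fun x => F x ^ 2) μ) :
    ∀ᵐ t ∂μ, ConvolutionExistsAt F K t (lsmul ℝ ℝ) μ := by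
  filter_upwards [hF2.ae_convolution_exists (lsmul ℝ ℝ) hK] with t ht
  have := integrable_mul_of_integrable_mul_sq (w := fun τ => K (t - τ))
    (ae_of_all _ fun τ => hK0 (t - τ)) (hK.comp_sub_left t) hF
    (by simpa [mul_comm] using ht.integrable)
  simpa [ConvolutionExistsAt, mul_comm] using this

theorem sq_convolution_le_integral_mul_convolution_sq (hK0 : 0 ≤ K) (hK : Integrable K μ)
    {t : G} (ht : ConvolutionExistsAt (F ^ 2) K t (lsmul ℝ ℝ) μ) :
    (F ⋆[lsmul ℝ ℝ, μ] K) t ^ 2 ≤ (∫ x, K x ∂μ) * (F ^ 2 ⋆[lsmul ℝ ℝ, μ] K) t := by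
  have := sq_integral_mul_le_integral_mul_integral_mul_sq (w := fun τ => K (t - τ)) (F := F)
    (ae_of_all _ fun τ => hK0 (t - τ)) (hK.comp_sub_left t)
    (by simpa [mul_comm] using ht.integrable)
  simp only [convolution_def, lsmul_apply, smul_eq_mul, Pi.pow_apply]
  rw [← integral_sub_left_eq_self K μ t]
  simpa only [mul_comm] using this

theorem integrable_sq_and_sqrt_integral_sq_le_of_abs_le_convolution [SFinite μ]
    {H : G → ℝ} (hH : AEStronglyMeasurable H μ) (hK0 : 0 ≤ K) (hK : Integrable K μ)
    (hF2 : Integrable (fun x => F x ^ 2) μ)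
    (hHF : ∀ᵐ t ∂μ, |H t| ≤ (F ⋆[lsmul ℝ ℝ, μ] K) t) :
    Integrable (fun t => H t ^ 2) μ ∧
      √(∫ t, H t ^ 2 ∂μ) ≤ (∫ x, K x ∂μ) * √(∫ x, F x ^ 2 ∂μ) := by
  have hbound : ∀ᵐ t ∂μ, H t ^ 2 ≤ (∫ x, K x ∂μ) * (F ^ 2 ⋆[lsmul ℝ ℝ, μ] K) t := by
    filter_upwards [hHF, hF2.ae_convolution_exists (lsmul ℝ ℝ) hK] with t hHt ht
    calc H t ^ 2 = |H t| ^ 2 := (sq_abs _).symm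
      _ ≤ (F ⋆[lsmul ℝ ℝ, μ] K) t ^ 2 := pow_le_pow_left₀ (abs_nonneg _) hHt 2
      _ ≤ _ := sq_convolution_le_integral_mul_convolution_sq hK0 hK ht
  have hdom : Integrable (fun t => (∫ x, K x ∂μ) * (F ^ 2 ⋆[lsmul ℝ ℝ, μ] K) t) μ :=
    (hF2.integrable_convolution (lsmul ℝ ℝ) hK).const_mul _
  have hH2 : Integrable (fun t => H t ^ 2) μ := hdom.mono' (hH.pow 2) <| by
    filter_upwards [hbound] with t ht
    rwa [Real.norm_of_nonneg (sq_nonneg _)]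
  refine ⟨hH2, ?_⟩
  have hle : ∫ t, H t ^ 2 ∂μ ≤ ((∫ x, K x ∂μ) * √(∫ x, F x ^ 2 ∂μ)) ^ 2 :=
    calc ∫ t, H t ^ 2 ∂μ ≤ ∫ t, (∫ x, K x ∂μ) * (F ^ 2 ⋆[lsmul ℝ ℝ, μ] K) t ∂μ :=
          integral_mono_ae hH2 hdom hbound
      _ = _ := by
          rw [integral_const_mul, integral_convolution (lsmul ℝ ℝ) (f := F ^ 2) hF2 hK,
            mul_pow, Real.sq_sqrt (integral_nonneg fun x => sq_nonneg _)]
          simp only [lsmul_apply, smul_eq_mul, Pi.pow_apply]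
          ring
  have hK_nonneg : 0 ≤ ∫ x, K x ∂μ := integral_nonneg hK0
  exact (Real.sqrt_le_sqrt hle).trans_eq (Real.sqrt_sq (by positivity))

end Young

noncomputable def expNegAbs (c x : ℝ) : ℝ := Real.exp (-(c * |x|))

theorem expNegAbs_pos (c x : ℝ) : 0 < expNegAbs c x := Real.exp_pos _

@[fun_prop]
theorem continuous_expNegAbs (c : ℝ) : Continuous (expNegAbs c) := by
  unfold expNegAbs
  fun_prop

theorem expNegAbs_sq (c x : ℝ) : expNegAbs c x ^ 2 = Real.exp (-2 * c * |x|) := by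
  rw [expNegAbs, ← Real.exp_nat_mul]
  ring_nf

theorem integral_expNegAbs {c : ℝ} (hc : 0 < c) : ∫ x, expNegAbs c x = 2 / c := by
  simp only [expNegAbs]
  rw [integral_comp_abs (f := fun y => Real.exp (-(c * y)))]
  have h := integral_comp_mul_left_Ioi (fun y => Real.exp (-y)) 0 hc
  simp only [mul_zero, integral_exp_neg_Ioi_zero, smul_eq_mul, mul_one] at h
  rw [h]
  field_simp

theorem integrable_expNegAbs {c : ℝ} (hc : 0 < c) : Integrable (expNegAbs c) :=
  .of_integral_ne_zero (by rw [integral_expNegAbs hc]; positivity)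

theorem expNegAbs_sub_mul_le {ω σ : ℝ} (hσ : 0 ≤ σ) (t τ : ℝ) :
    expNegAbs ω (t - τ) * expNegAbs σ t ≤ expNegAbs (ω - σ) (t - τ) * expNegAbs σ τ := by
  simp only [expNegAbs, ← Real.exp_add]
  apply Real.exp_le_exp.2
  nlinarith [abs_sub_abs_le_abs_sub τ t, abs_sub_comm τ t]

theorem inv_cosh_le_two_mul_exp_neg_abs (x : ℝ) : (Real.cosh x)⁻¹ ≤ 2 * Real.exp (-|x|) := by
  have hexp : Real.exp |x| ≤ 2 * Real.cosh x := by
    rw [Real.cosh_eq]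
    rcases abs_cases x with ⟨h, _⟩ | ⟨h, _⟩ <;> rw [h] <;>
      linarith [Real.exp_pos x, Real.exp_pos (-x)]
  rw [Real.exp_neg, inv_le_iff_one_le_mul₀ (Real.cosh_pos x)]
  calc 1 = Real.exp |x| * (Real.exp |x|)⁻¹ := (mul_inv_cancel₀ (Real.exp_pos _).ne').symm
    _ ≤ 2 * Real.cosh x * (Real.exp |x|)⁻¹ := by gcongr
    _ = 2 * (Real.exp |x|)⁻¹ * Real.cosh x := by ring

theorem Cker_nonneg {ω : ℝ} (hω : 0 ≤ ω) (ξ : ℝ) : 0 ≤ Cker ω ξ := by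
  have := Real.cosh_pos (ω * ξ)
  unfold Cker
  positivity

theorem Cker_le {ω : ℝ} (hω : 0 ≤ ω) (ξ : ℝ) :
    Cker ω ξ ≤ 2 * (ω / Real.pi) * expNegAbs ω ξ := by
  have h := inv_cosh_le_two_mul_exp_neg_abs (ω * ξ)
  rw [abs_mul, abs_of_nonneg hω] at h
  rw [Cker, expNegAbs, one_div, mul_comm 2, mul_assoc]
  gcongr

@[fun_prop]
theorem continuous_Cker (ω : ℝ) : Continuous (Cker ω) := by
  unfold Cker
  exact continuous_const.mul (continuous_const.div (by fun_prop) fun _ => (Real.cosh_pos _).ne')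

noncomputable def CkerMajorant (ω σ ξ : ℝ) : ℝ := 2 * (ω / Real.pi) * expNegAbs (ω - σ) ξ

theorem CkerMajorant_nonneg {ω : ℝ} (hω : 0 ≤ ω) (σ ξ : ℝ) : 0 ≤ CkerMajorant ω σ ξ := by
  have := expNegAbs_pos (ω - σ) ξ
  unfold CkerMajorant
  positivity

theorem integrable_CkerMajorant {ω σ : ℝ} (hσω : σ < ω) : Integrable (CkerMajorant ω σ) :=
  (integrable_expNegAbs (sub_pos.2 hσω)).const_mul _

theorem integral_CkerMajorant_le {ω σ : ℝ} (hω : 0 < ω) (hσω : σ < ω) :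
    ∫ ξ, CkerMajorant ω σ ξ ≤ 2 / (1 - σ / ω) := by
  have hωσ : 0 < ω - σ := sub_pos.2 hσω
  have hπ : 4 / Real.pi ≤ 2 := by
    rw [div_le_iff₀ Real.pi_pos]
    linarith [Real.pi_gt_three]
  simp only [CkerMajorant]
  rw [integral_const_mul, integral_expNegAbs hωσ,
    show 1 - σ / ω = (ω - σ) / ω by field_simp, div_div_eq_mul_div]
  calc 2 * (ω / Real.pi) * (2 / (ω - σ)) = 4 / Real.pi * (ω / (ω - σ)) := by ring
    _ ≤ 2 * (ω / (ω - σ)) := by gcongr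
    _ = 2 * ω / (ω - σ) := by ring

theorem Cker_sub_mul_expNegAbs_le {ω σ : ℝ} (hω : 0 ≤ ω) (hσ : 0 ≤ σ) (t τ : ℝ) :
    Cker ω (t - τ) * expNegAbs σ t ≤ CkerMajorant ω σ (t - τ) * expNegAbs σ τ :=
  calc Cker ω (t - τ) * expNegAbs σ t
      ≤ 2 * (ω / Real.pi) * expNegAbs ω (t - τ) * expNegAbs σ t :=
        mul_le_mul_of_nonneg_right (Cker_le hω _) (expNegAbs_pos _ _).le
    _ ≤ 2 * (ω / Real.pi) * (expNegAbs (ω - σ) (t - τ) * expNegAbs σ τ) := by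
        rw [mul_assoc]
        exact mul_le_mul_of_nonneg_left (expNegAbs_sub_mul_le hσ t τ) (by positivity)
    _ = CkerMajorant ω σ (t - τ) * expNegAbs σ τ := by rw [CkerMajorant]; ring

theorem norm_integral_Cker_mul_mul_expNegAbs_le {ω σ : ℝ} (hω : 0 ≤ ω) (hσ : 0 ≤ σ)
    {f : ℝ → ℂ} {t : ℝ}
    (ht : ConvolutionExistsAt (fun τ => ‖f τ‖ * expNegAbs σ τ) (CkerMajorant ω σ) t (lsmul ℝ ℝ)) :
    ‖∫ τ, (Cker ω (t - τ) : ℂ) * f τ‖ * expNegAbs σ t ≤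
      ((fun τ => ‖f τ‖ * expNegAbs σ τ) ⋆[lsmul ℝ ℝ] CkerMajorant ω σ) t := by
  have hnorm : ‖∫ τ, (Cker ω (t - τ) : ℂ) * f τ‖ ≤ ∫ τ, Cker ω (t - τ) * ‖f τ‖ := by
    refine (norm_integral_le_integral_norm _).trans_eq
      (integral_congr_ae (ae_of_all _ fun τ => ?_))
    simp [abs_of_nonneg (Cker_nonneg hω _)]
  have he := expNegAbs_pos σ t
  simp only [convolution_def, lsmul_apply, smul_eq_mul] at ht ⊢
  calc ‖∫ τ, (Cker ω (t - τ) : ℂ) * f τ‖ * expNegAbs σ t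
      ≤ (∫ τ, Cker ω (t - τ) * ‖f τ‖) * expNegAbs σ t := mul_le_mul_of_nonneg_right hnorm he.le
    _ = ∫ τ, Cker ω (t - τ) * expNegAbs σ t * ‖f τ‖ := by
        rw [← integral_mul_const]
        congr 1 with τ
        ring
    _ ≤ ∫ τ, ‖f τ‖ * expNegAbs σ τ * CkerMajorant ω σ (t - τ) :=
        integral_mono_of_nonneg
          (ae_of_all _ fun τ => mul_nonneg (mul_nonneg (Cker_nonneg hω _) he.le) (norm_nonneg _))
          ht.integrable (ae_of_all _ fun τ =>
            (mul_le_mul_of_nonneg_right (Cker_sub_mul_expNegAbs_le hω hσ t τ)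
              (norm_nonneg _)).trans_eq (by ring))

theorem stronglyMeasurable_integral_sub_mul {G : Type*} [AddGroup G] [MeasurableSpace G]
    [MeasurableSub₂ G] {μ : Measure G} [SFinite μ] {k f : G → ℂ} (hk : Measurable k)
    (hf : Measurable f) : StronglyMeasurable fun t => ∫ τ, k (t - τ) * f τ ∂μ :=
  StronglyMeasurable.integral_prod_right' (f := fun p : G × G => k (p.1 - p.2) * f p.2)
    (by fun_prop : Measurable _).stronglyMeasurable

/-- Let `ω > 0`, `0 ≤ σ < ω`, and let `f ∈ L²_σ`, i.e. `f` measurable with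
`∫ |f(τ)|² e^{-2σ|τ|} dτ < ∞`. With `g(t) = ∫ C_ω(t-τ) f(τ) dτ` one has `g ∈ L²_σ` and
`‖g‖_{L²_σ} ≤ (2/(1-σ/ω)) ‖f‖_{L²_σ}`. -/
theorem stmt16 (ω σ : ℝ) (hω : 0 < ω) (hσ0 : 0 ≤ σ) (hσω : σ < ω)
    (f : ℝ → ℂ) (hmf : Measurable f)
    (hf : Integrable (fun τ : ℝ => ‖f τ‖ ^ 2 * Real.exp (-2 * σ * |τ|)))
    (g : ℝ → ℂ) (hg : g = fun t : ℝ => ∫ τ : ℝ, (Cker ω (t - τ) : ℂ) * f τ) :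
    Integrable (fun t : ℝ => ‖g t‖ ^ 2 * Real.exp (-2 * σ * |t|)) ∧
      Real.sqrt (∫ t : ℝ, ‖g t‖ ^ 2 * Real.exp (-2 * σ * |t|))
        ≤ (2 / (1 - σ / ω)) * Real.sqrt (∫ τ : ℝ, ‖f τ‖ ^ 2 * Real.exp (-2 * σ * |τ|)) := by
  subst hg
  set F : ℝ → ℝ := fun τ => ‖f τ‖ * expNegAbs σ τ
  have hK0 : 0 ≤ CkerMajorant ω σ := CkerMajorant_nonneg hω.le σ
  have hK := integrable_CkerMajorant hσω
  have hF : AEStronglyMeasurable F := by fun_prop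
  have hF2 : Integrable fun τ => F τ ^ 2 :=
    hf.congr (ae_of_all _ fun τ => by simp only [F, mul_pow, expNegAbs_sq])
  have hgF : ∀ᵐ t, |‖∫ τ, (Cker ω (t - τ) : ℂ) * f τ‖ * expNegAbs σ t| ≤
      (F ⋆[lsmul ℝ ℝ] CkerMajorant ω σ) t := by
    filter_upwards [ae_convolutionExistsAt_of_integrable_sq hK0 hK hF hF2] with t ht
    rw [abs_of_nonneg (mul_nonneg (norm_nonneg _) (expNegAbs_pos σ t).le)]
    exact norm_integral_Cker_mul_mul_expNegAbs_le hω.le hσ0 ht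
  have hgm : AEStronglyMeasurable fun t => ‖∫ τ, (Cker ω (t - τ) : ℂ) * f τ‖ * expNegAbs σ t :=
    (stronglyMeasurable_integral_sub_mul (k := fun ξ => (Cker ω ξ : ℂ)) (by fun_prop)
      hmf).aestronglyMeasurable.norm.mul (continuous_expNegAbs σ).aestronglyMeasurable
  obtain ⟨hint, hle⟩ :=
    integrable_sq_and_sqrt_integral_sq_le_of_abs_le_convolution hgm hK0 hK hF2 hgF
  simp only [F, mul_pow, expNegAbs_sq] at hint hle
  exact ⟨hint, hle.trans <|
    mul_le_mul_of_nonneg_right (integral_CkerMajorant_le hω hσω) (Real.sqrt_nonneg _)⟩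
end
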